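/- The implication connective is not definable from ¬, ∨, ∧, ⊤ in Gödel–Dummett logic: no →-free formula in atoms p, q has the same forcing set as p → q in every connected finite Kripke model. Witness: in the model K = {a,b,c} with b ≽ a, b ≽ c, a ⊩ p, b ⊩ p,q, both b and c force p → q but a does not, while every →-free formula forced at both b and c is forced at a. -/

import Mathlib

inductive Fm (α : Type) : Type where
  | top  : Fm α
  | atom : α → Fm α
  | neg  : Fm α → Fm α
  | and  : Fm α → Fm α → Fm α
  | or   : Fm α → Fm α → Fm α
  | imp  : Fm α → Fm α → Fm α

structure KripkeModel (α : Type) : Type 1 where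
  K : Type
  le : K → K → Prop
  refl : ∀ k, le k k
  trans : ∀ {a b c}, le a b → le b c → le a c
  antisymm : ∀ {a b}, le a b → le b a → a = b
  val : K → α → Prop
  persist : ∀ {k k' p}, le k k' → val k p → val k' p

def force {α : Type} (M : KripkeModel α) : M.K → Fm α → Prop
  | _, .top => True
  | k, .atom p => M.val k p
  | k, .neg φ => ∀ k', M.le k k' → ¬ force M k' φ
  | k, .and φ ψ => force M k φ ∧ force M k ψ
  | k, .or φ ψ => force M k φ ∨ force M k ψ
  | k, .imp φ ψ => ∀ k', M.le k k' → force M k' φ → force M k' ψ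

/-- →-free formulas: built using only ¬, ∨, ∧, ⊤ and atoms. -/
def NoImp {α : Type} : Fm α → Prop
  | .top => True
  | .atom _ => True
  | .neg φ => NoImp φ
  | .and φ ψ => NoImp φ ∧ NoImp ψ
  | .or φ ψ => NoImp φ ∧ NoImp ψ
  | .imp _ _ => False

/-- A Kripke model is connected when any two nodes above a common node are
comparable. -/
def Connected {α : Type} (M : KripkeModel α) : Prop :=
  ∀ k k' k'' : M.K, M.le k k' → M.le k k'' → M.le k' k'' ∨ M.le k'' k'

theorem force_mono {α : Type} (M : KripkeModel α) (φ : Fm α) {k k' : M.K}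
    (hk : M.le k k') : force M k φ → force M k' φ := by
  induction φ generalizing k k' with
  | top => exact id
  | atom p => exact M.persist hk
  | neg φ _ => exact fun h k'' hk'' => h k'' (M.trans hk hk'')
  | and φ ψ ihφ ihψ => exact fun h => ⟨ihφ hk h.1, ihψ hk h.2⟩
  | or φ ψ ihφ ihψ => exact Or.imp (ihφ hk) (ihψ hk)
  | imp φ ψ _ _ => exact fun h k'' hk'' => h k'' (M.trans hk hk'')

/-- Negation at `a` only sees `b`, since every proper successor of `a` lies above `b`; a disjunction
forced at `c` is forced at `b` through the same disjunct, by persistence. -/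
theorem NoImp.force_of_force_of_force {α : Type} {M : KripkeModel α} {φ : Fm α} (hφ : NoImp φ)
    {a b c : M.K} (hab : M.le a b) (hcb : M.le c b) (hsucc : ∀ k, M.le a k → k = a ∨ M.le b k)
    (hval : ∀ p, M.val c p → M.val a p) : force M b φ → force M c φ → force M a φ := by
  induction φ with
  | top => exact fun _ _ => trivial
  | atom p => exact fun _ hc => hval p hc
  | neg φ _ =>
    intro hb _ k hak hk
    rcases hsucc k hak with rfl | hbk
    · exact hb b (M.refl b) (force_mono M φ hab hk)
    · exact hb k hbk hk
  | and φ ψ ihφ ihψ => exact fun hb hc => ⟨ihφ hφ.1 hb.1 hc.1, ihψ hφ.2 hb.2 hc.2⟩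
  | or φ ψ ihφ ihψ =>
    rintro - (hc | hc)
    · exact Or.inl (ihφ hφ.1 (force_mono M φ hcb hc) hc)
    · exact Or.inr (ihψ hφ.2 (force_mono M ψ hcb hc) hc)
  | imp => exact hφ.elim

/-- The nodes `a, b, c` are `0, 1, 2`; `p` holds at `a` and `b`, `q` only at `b`. -/
abbrev vModel : KripkeModel (Fin 2) where
  K := Fin 3
  le x y := x = y ∨ y = 1
  refl _ := Or.inl rfl
  trans := by decide
  antisymm := by decide
  val k i := (i = 0 ∧ k ≠ 2) ∨ (i = 1 ∧ k = 1)
  persist := by decide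

theorem vModel_connected : Connected vModel := by
  unfold Connected; decide

theorem vModel_force_imp_iff (k : Fin 3) :
    force vModel k (Fm.imp (Fm.atom 0) (Fm.atom 1)) ↔ k ≠ 0 := by
  simp only [force]
  revert k; decide

/-- Implication is not definable from ¬, ∨, ∧, ⊤ in Gödel–Dummett logic: no
→-free formula in the atoms p = 0, q = 1 is forced at exactly the same nodes as
p → q in every connected finite Kripke model. -/
theorem imp_not_definable_GDL :
    ¬ ∃ θ : Fm (Fin 2), NoImp θ ∧
      ∀ (M : KripkeModel (Fin 2)), Fintype M.K → Connected M →
        ∀ k : M.K, (force M k θ ↔ force M k (Fm.imp (Fm.atom 0) (Fm.atom 1))) := by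
  rintro ⟨θ, hθ, hdef⟩
  have hdef' (k : Fin 3) : force vModel k θ ↔ k ≠ 0 :=
    (hdef vModel (inferInstanceAs (Fintype (Fin 3))) vModel_connected k).trans
      (vModel_force_imp_iff k)
  have hsucc : ∀ k : Fin 3, vModel.le (0 : Fin 3) k → k = 0 ∨ vModel.le (1 : Fin 3) k := by
    decide
  have hval : ∀ p, vModel.val (2 : Fin 3) p → vModel.val (0 : Fin 3) p := by decide
  have ha : force vModel (0 : Fin 3) θ :=
    hθ.force_of_force_of_force (b := (1 : Fin 3)) (Or.inr rfl) (Or.inr rfl) hsucc hval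
      ((hdef' 1).2 (by decide)) ((hdef' 2).2 (by decide))
  exact (hdef' 0).1 ha rfl
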